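/- Weighted Hardy inequality in the Gaussian-type weight: there exists C > 0 independent of b ∈ (0,1) such that for all u ∈ C¹(ℝ²) with the right-hand side finite, ∫_{ℝ²} (1+|y|²) u² e^{−b|y|²/2} dy ≤ C ∫_{ℝ²} (1+|y|⁴)|∇u|² e^{−b|y|²/2} dy, provided u has no radial component (∫_{|y|=r} u = 0 for a.e. r > 0). -/

import Mathlib

open MeasureTheory Filter

noncomputable section

abbrev E2 : Type := EuclideanSpace ℝ (Fin 2)

/-- The point of polar coordinates `(r, θ)` in ℝ². -/
def circPt (r θ : ℝ) : E2 :=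
  (WithLp.equiv 2 (Fin 2 → ℝ)).symm ![r * Real.cos θ, r * Real.sin θ]

/-! On the circle of radius `r` the function `θ ↦ u (circPt r θ)` has mean zero, so it vanishes
somewhere; from there `|u| ≤ ∫ |∂_θ u|`, and Cauchy–Schwarz gives the Wirtinger-type bound
`∫ u² dθ ≤ (2π)² ∫ (∂_θ u)² dθ ≤ 4π² r² ∫ |∇u|² dθ`. Integrating in polar coordinates against
a radial weight `ω` gives `∫ ω(|y|) u² ≤ 4π² ∫ ω(|y|) |y|² |∇u|²`. With
`ω(r) = (1 + r²) e^{-br²/2}` and `r² (1 + r²) ≤ 2 (1 + r⁴)` the theorem follows with `C = 8π²`,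
whatever `b` is. -/

open Set Real
open scoped Interval ENNReal

theorem sq_intervalIntegral_le_mul_intervalIntegral_sq {f : ℝ → ℝ} {a b : ℝ} (hab : a ≤ b)
    (hf : ContinuousOn f (Icc a b)) :
    (∫ x in a..b, f x) ^ 2 ≤ (b - a) * ∫ x in a..b, f x ^ 2 := by
  rcases hab.eq_or_lt with rfl | hab
  · simp
  have hba : 0 < b - a := sub_pos.2 hab
  have hint : IntegrableOn f (Ι a b) := by
    rw [uIoc_of_le hab.le]
    exact (hf.integrableOn_Icc).mono_set Ioc_subset_Icc_self
  have hint2 : IntegrableOn (fun x => f x ^ 2) (Ι a b) := by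
    rw [uIoc_of_le hab.le]
    exact ((hf.pow 2).integrableOn_Icc).mono_set Ioc_subset_Icc_self
  have hjensen : (⨍ x in a..b, f x) ^ 2 ≤ ⨍ x in a..b, f x ^ 2 := by
    have : NeZero (volume.restrict (Ι a b)) := ⟨by simp [uIoc_of_le hab.le, hab]⟩
    have : IsFiniteMeasure (volume.restrict (Ι a b)) := by
      rw [uIoc_of_le hab.le]; infer_instance
    exact (even_two.convexOn_pow).map_average_le (continuousOn_pow 2) isClosed_univ
      (by filter_upwards; simp) hint hint2
  rw [interval_average_eq_div, interval_average_eq_div, div_pow,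
    div_le_div_iff₀ (by positivity) hba] at hjensen
  nlinarith

theorem intervalIntegral_sq_le_of_intervalIntegral_eq_zero {g g' : ℝ → ℝ} {a b : ℝ}
    (hab : a ≤ b) (hg : ∀ x ∈ Icc a b, HasDerivAt g (g' x) x)
    (hg' : ContinuousOn g' (Icc a b)) (h0 : ∫ x in a..b, g x = 0) :
    ∫ x in a..b, g x ^ 2 ≤ (b - a) ^ 2 * ∫ x in a..b, g' x ^ 2 := by
  rcases hab.eq_or_lt with rfl | hab
  · simp
  have hIcc : uIcc a b = Icc a b := uIcc_of_le hab.le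
  have hgcont : ContinuousOn g (uIcc a b) := fun x hx =>
    (hg x (hIcc ▸ hx)).continuousAt.continuousWithinAt
  obtain ⟨c, hc, hgc⟩ : ∃ c ∈ uIoo a b, g c = 0 := by
    simpa [interval_average_eq_div, h0] using exists_eq_interval_average hab.ne hgcont
  have hcIcc : c ∈ Icc a b := by
    rw [uIoo_of_le hab.le] at hc; exact Ioo_subset_Icc_self hc
  have hg'int : IntervalIntegrable (fun x => |g' x|) volume a b :=
    (hg'.abs.mono hIcc.subset).intervalIntegrable
  set S := ∫ x in a..b, |g' x|
  have hbound : ∀ x ∈ Icc a b, |g x| ≤ S := by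
    intro x hx
    have hsub : uIcc c x ⊆ Icc a b := (ordConnected_Icc).uIcc_subset hcIcc hx
    have hftc : ∫ t in c..x, g' t = g x := by
      rw [intervalIntegral.integral_eq_sub_of_hasDerivAt (fun t ht => hg t (hsub ht))
        ((hg'.mono hsub).intervalIntegrable), hgc, sub_zero]
    calc |g x| = ‖∫ t in c..x, g' t‖ := by rw [hftc, Real.norm_eq_abs]
      _ ≤ |∫ t in c..x, ‖g' t‖| := intervalIntegral.norm_integral_le_abs_integral_norm
      _ ≤ |S| := intervalIntegral.abs_integral_mono_interval
          (uIoc_subset_uIoc_of_uIcc_subset_uIcc (hIcc ▸ hsub))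
          (ae_of_all _ fun t => abs_nonneg _) hg'int
      _ = S := abs_of_nonneg (intervalIntegral.integral_nonneg hab.le fun t _ => abs_nonneg _)
  calc ∫ x in a..b, g x ^ 2 ≤ ∫ _ in a..b, S ^ 2 :=
        intervalIntegral.integral_mono_on hab.le (hgcont.pow 2).intervalIntegrable
          intervalIntegrable_const
          fun x hx => by simpa [sq_abs] using pow_le_pow_left₀ (abs_nonneg _) (hbound x hx) 2
    _ = (b - a) * S ^ 2 := by simp
    _ ≤ (b - a) * ((b - a) * ∫ x in a..b, |g' x| ^ 2) := by
        gcongr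
        exact sq_intervalIntegral_le_mul_intervalIntegral_sq hab.le hg'.abs
    _ = (b - a) ^ 2 * ∫ x in a..b, g' x ^ 2 := by simp only [sq_abs]; ring

theorem norm_circPt (r θ : ℝ) : ‖circPt r θ‖ = |r| := by
  rw [EuclideanSpace.norm_eq, ← Real.sqrt_sq_eq_abs]
  congr 1
  simp only [circPt, WithLp.equiv_symm_apply, PiLp.toLp_apply, Fin.sum_univ_two,
    Matrix.cons_val_zero, Matrix.cons_val_one, Real.norm_eq_abs, sq_abs]
  linear_combination r ^ 2 * Real.cos_sq_add_sin_sq θ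

theorem continuous_uncurry_circPt : Continuous (Function.uncurry circPt) :=
  (PiLp.continuous_toLp 2 _).comp <| continuous_pi fun i => by
    fin_cases i <;> simp <;> fun_prop

theorem periodic_circPt (r : ℝ) : Function.Periodic (circPt r) (2 * π) := fun θ => by
  simp only [circPt, cos_add_two_pi, sin_add_two_pi]

theorem hasDerivAt_circPt (r θ : ℝ) : HasDerivAt (circPt r) (circPt r (θ + π / 2)) θ := by
  have hpi : HasDerivAt (fun t => (![r * cos t, r * sin t] : Fin 2 → ℝ))
      ![r * cos (θ + π / 2), r * sin (θ + π / 2)] θ := by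
    refine hasDerivAt_pi.2 fun i => ?_
    fin_cases i
    · simpa [cos_add_pi_div_two] using (hasDerivAt_cos θ).const_mul r
    · simpa [sin_add_pi_div_two] using (hasDerivAt_sin θ).const_mul r
  exact (PiLp.continuousLinearEquiv 2 ℝ _).symm.hasFDerivAt.comp_hasDerivAt θ hpi

theorem lintegral_eq_lintegral_circPt {H : E2 → ℝ≥0∞} (hH : Measurable H) :
    ∫⁻ y, H y = ∫⁻ r in Ioi 0, ∫⁻ θ in Ioo (-π) π, ENNReal.ofReal r * H (circPt r θ) := by
  let e : ℝ × ℝ ≃ᵐ E2 := MeasurableEquiv.finTwoArrow.symm.trans (MeasurableEquiv.toLp 2 _)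
  have he : MeasurePreserving e :=
    (PiLp.volume_preserving_toLp (Fin 2)).comp (volume_preserving_finTwoArrow ℝ).symm
  rw [← he.lintegral_comp_emb e.measurableEmbedding, ← lintegral_comp_polarCoord_symm,
    show polarCoord.target = Ioi (0 : ℝ) ×ˢ Ioo (-π) π from rfl, Measure.volume_eq_prod,
    ← Measure.prod_restrict, lintegral_prod]
  · rfl
  exact ((ENNReal.measurable_ofReal.comp measurable_fst).mul
    (hH.comp continuous_uncurry_circPt.measurable)).aemeasurable

theorem lintegral_Ioo_ofReal_eq_ofReal_intervalIntegral {f : ℝ → ℝ} {a b : ℝ} (hab : a ≤ b)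
    (hf : ContinuousOn f (Icc a b)) (hf0 : ∀ x, 0 ≤ f x) :
    ∫⁻ x in Ioo a b, ENNReal.ofReal (f x) = ENNReal.ofReal (∫ x in a..b, f x) := by
  rw [Measure.restrict_congr_set Ioo_ae_eq_Ioc, intervalIntegral.integral_of_le hab,
    ofReal_integral_eq_lintegral_ofReal ((hf.integrableOn_Icc).mono_set Ioc_subset_Icc_self)
      (ae_of_all _ hf0)]

theorem integral_sq_comp_circPt_le {u : E2 → ℝ} (hu : ContDiff ℝ 1 u) {r : ℝ}
    (hmean : ∫ θ in 0..2 * π, u (circPt r θ) = 0) :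
    ∫ θ in -π..π, u (circPt r θ) ^ 2 ≤
      4 * π ^ 2 * r ^ 2 * ∫ θ in -π..π, ‖fderiv ℝ u (circPt r θ)‖ ^ 2 := by
  set N := fun θ => ‖fderiv ℝ u (circPt r θ)‖
  set g' := fun θ => fderiv ℝ u (circPt r θ) (circPt r (θ + π / 2))
  have hcirc : Continuous (circPt r) := continuous_uncurry_circPt.comp (Continuous.prodMk_right r)
  have hdu : Continuous (fderiv ℝ u) := hu.continuous_fderiv one_ne_zero
  have hderiv (θ : ℝ) : HasDerivAt (fun θ => u (circPt r θ)) (g' θ) θ :=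
    (hu.differentiable one_ne_zero _).hasFDerivAt.comp_hasDerivAt θ (hasDerivAt_circPt r θ)
  have hg' : Continuous g' :=
    (hdu.comp hcirc).clm_apply (hcirc.comp (continuous_add_const _))
  have hzero : ∫ θ in -π..π, u (circPt r θ) = 0 := by
    have := ((periodic_circPt r).comp u).intervalIntegral_add_eq (-π) 0
    rw [show -π + 2 * π = π by ring, zero_add] at this
    exact this.trans hmean
  have hg'_le (θ : ℝ) : g' θ ^ 2 ≤ r ^ 2 * N θ ^ 2 := by
    have := (fderiv ℝ u (circPt r θ)).le_opNorm (circPt r (θ + π / 2))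
    rw [norm_circPt, Real.norm_eq_abs] at this
    calc g' θ ^ 2 = |g' θ| ^ 2 := (sq_abs _).symm
      _ ≤ (N θ * |r|) ^ 2 := by gcongr
      _ = r ^ 2 * N θ ^ 2 := by rw [mul_pow, sq_abs, mul_comm]
  calc ∫ θ in -π..π, u (circPt r θ) ^ 2
      ≤ (π - -π) ^ 2 * ∫ θ in -π..π, g' θ ^ 2 :=
        intervalIntegral_sq_le_of_intervalIntegral_eq_zero (by linarith [pi_pos])
          (fun θ _ => hderiv θ) hg'.continuousOn hzero
    _ ≤ (π - -π) ^ 2 * ∫ θ in -π..π, r ^ 2 * N θ ^ 2 := by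
        gcongr
        exact intervalIntegral.integral_mono_on (by linarith [pi_pos])
          ((hg'.pow 2).intervalIntegrable _ _)
          ((continuous_const.mul ((hdu.comp hcirc).norm.pow 2)).intervalIntegrable _ _)
          fun θ _ => hg'_le θ
    _ = 4 * π ^ 2 * r ^ 2 * ∫ θ in -π..π, N θ ^ 2 := by
        rw [intervalIntegral.integral_const_mul]; ring

theorem lintegral_sq_comp_circPt_le {u : E2 → ℝ} (hu : ContDiff ℝ 1 u) {r : ℝ}
    (hmean : ∫ θ in 0..2 * π, u (circPt r θ) = 0) :
    ∫⁻ θ in Ioo (-π) π, ENNReal.ofReal (u (circPt r θ) ^ 2) ≤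
      ENNReal.ofReal (4 * π ^ 2 * r ^ 2) *
        ∫⁻ θ in Ioo (-π) π, ENNReal.ofReal (‖fderiv ℝ u (circPt r θ)‖ ^ 2) := by
  have hcirc : Continuous (circPt r) := continuous_uncurry_circPt.comp (Continuous.prodMk_right r)
  have hu₀ := hu.continuous
  have hu₁ := hu.continuous_fderiv one_ne_zero
  have hle : -π ≤ π := by linarith [pi_pos]
  rw [lintegral_Ioo_ofReal_eq_ofReal_intervalIntegral (f := fun θ => u (circPt r θ) ^ 2)
      hle (by fun_prop) fun _ => sq_nonneg _,
    lintegral_Ioo_ofReal_eq_ofReal_intervalIntegral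
      (f := fun θ => ‖fderiv ℝ u (circPt r θ)‖ ^ 2) hle (by fun_prop) fun _ => sq_nonneg _,
    ← ENNReal.ofReal_mul (by positivity)]
  exact ENNReal.ofReal_le_ofReal (integral_sq_comp_circPt_le hu hmean)

theorem lintegral_radial_mul_sq_le {u : E2 → ℝ} (hu : ContDiff ℝ 1 u)
    (hmean : ∀ r, 0 < r → ∫ θ in 0..2 * π, u (circPt r θ) = 0)
    {ω : ℝ → ℝ} (hω : Measurable ω) :
    ∫⁻ y, ENNReal.ofReal (ω ‖y‖ * u y ^ 2) ≤
      ENNReal.ofReal (4 * π ^ 2) *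
        ∫⁻ y, ENNReal.ofReal (ω ‖y‖ * ‖y‖ ^ 2 * ‖fderiv ℝ u y‖ ^ 2) := by
  have hu₀ := hu.continuous
  have hu₁ := hu.continuous_fderiv one_ne_zero
  rw [lintegral_eq_lintegral_circPt (by fun_prop), lintegral_eq_lintegral_circPt (by fun_prop),
    ← lintegral_const_mul' _ _ ENNReal.ofReal_ne_top]
  refine setLIntegral_mono' measurableSet_Ioi fun r (hr : 0 < r) => ?_
  have hnorm (θ : ℝ) : ‖circPt r θ‖ = r := by rw [norm_circPt, abs_of_pos hr]
  set c := ENNReal.ofReal r * ENNReal.ofReal (ω r) with hc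
  have hc_ne_top : c ≠ ⊤ := by finiteness
  calc ∫⁻ θ in Ioo (-π) π, ENNReal.ofReal r * ENNReal.ofReal (ω ‖circPt r θ‖ * u (circPt r θ) ^ 2)
      = c * ∫⁻ θ in Ioo (-π) π, ENNReal.ofReal (u (circPt r θ) ^ 2) := by
        rw [← lintegral_const_mul' _ _ hc_ne_top]
        refine lintegral_congr fun θ => ?_
        rw [hnorm, ENNReal.ofReal_mul' (sq_nonneg _), hc, mul_assoc]
    _ ≤ c * (ENNReal.ofReal (4 * π ^ 2 * r ^ 2) *
          ∫⁻ θ in Ioo (-π) π, ENNReal.ofReal (‖fderiv ℝ u (circPt r θ)‖ ^ 2)) := by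
        gcongr
        exact lintegral_sq_comp_circPt_le hu (hmean r hr)
    _ = ENNReal.ofReal (4 * π ^ 2) * ∫⁻ θ in Ioo (-π) π, ENNReal.ofReal r *
          ENNReal.ofReal (ω ‖circPt r θ‖ * ‖circPt r θ‖ ^ 2 * ‖fderiv ℝ u (circPt r θ)‖ ^ 2) := by
        rw [← lintegral_const_mul' _ _ (by finiteness), ← lintegral_const_mul' _ _ hc_ne_top,
          ← lintegral_const_mul' _ _ (by finiteness)]
        refine lintegral_congr fun θ => ?_
        rw [hnorm, hc, ENNReal.ofReal_mul' (sq_nonneg ‖fderiv ℝ u (circPt r θ)‖)]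
        simp only [ENNReal.ofReal_mul' (sq_nonneg r)]
        ring

/-- weighted Hardy inequality in the Gaussian-type weight, with constant
uniform in `b ∈ (0,1)`: for `u` of class `C¹` with no radial component,
`∫ (1+|y|²) u² e^{-b|y|²/2} ≤ C ∫ (1+|y|⁴)|∇u|² e^{-b|y|²/2}`. -/
theorem weighted_hardy_gaussian :
    ∃ C : ℝ, 0 < C ∧ ∀ b : ℝ, 0 < b → b < 1 → ∀ u : E2 → ℝ,
      ContDiff ℝ 1 u →
      (∀ r : ℝ, 0 < r → (∫ θ in (0:ℝ)..(2*Real.pi), u (circPt r θ)) = 0) →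
      (∫⁻ y : E2, ENNReal.ofReal
          ((1+‖y‖^2) * (u y)^2 * Real.exp (-b*‖y‖^2/2))) ≤
        ENNReal.ofReal C * ∫⁻ y : E2, ENNReal.ofReal
          ((1+‖y‖^4) * ‖fderiv ℝ u y‖^2 * Real.exp (-b*‖y‖^2/2)) := by
  refine ⟨8 * π ^ 2, by positivity, fun b _ _ u hu hmean => ?_⟩
  set ω : ℝ → ℝ := fun s => (1 + s ^ 2) * exp (-b * s ^ 2 / 2)
  calc ∫⁻ y, ENNReal.ofReal ((1 + ‖y‖ ^ 2) * u y ^ 2 * exp (-b * ‖y‖ ^ 2 / 2))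
      = ∫⁻ y, ENNReal.ofReal (ω ‖y‖ * u y ^ 2) := lintegral_congr fun y => by simp only [ω]; ring_nf
    _ ≤ ENNReal.ofReal (4 * π ^ 2) *
          ∫⁻ y, ENNReal.ofReal (ω ‖y‖ * ‖y‖ ^ 2 * ‖fderiv ℝ u y‖ ^ 2) :=
        lintegral_radial_mul_sq_le hu hmean (by fun_prop)
    _ ≤ ENNReal.ofReal (8 * π ^ 2) * ∫⁻ y, ENNReal.ofReal
          ((1 + ‖y‖ ^ 4) * ‖fderiv ℝ u y‖ ^ 2 * exp (-b * ‖y‖ ^ 2 / 2)) := by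
        rw [← lintegral_const_mul' _ _ ENNReal.ofReal_ne_top,
          ← lintegral_const_mul' _ _ ENNReal.ofReal_ne_top]
        refine lintegral_mono fun y => ?_
        rw [← ENNReal.ofReal_mul (by positivity), ← ENNReal.ofReal_mul (by positivity)]
        refine ENNReal.ofReal_le_ofReal ?_
        have hpoly : ‖y‖ ^ 2 * (1 + ‖y‖ ^ 2) ≤ 2 * (1 + ‖y‖ ^ 4) := by
          nlinarith [sq_nonneg (‖y‖ ^ 2 - 1)]
        calc 4 * π ^ 2 * (ω ‖y‖ * ‖y‖ ^ 2 * ‖fderiv ℝ u y‖ ^ 2)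
            = 4 * π ^ 2 * (‖y‖ ^ 2 * (1 + ‖y‖ ^ 2)) *
                (‖fderiv ℝ u y‖ ^ 2 * exp (-b * ‖y‖ ^ 2 / 2)) := by ring
          _ ≤ 4 * π ^ 2 * (2 * (1 + ‖y‖ ^ 4)) *
                (‖fderiv ℝ u y‖ ^ 2 * exp (-b * ‖y‖ ^ 2 / 2)) := by gcongr
          _ = 8 * π ^ 2 * ((1 + ‖y‖ ^ 4) * ‖fderiv ℝ u y‖ ^ 2 * exp (-b * ‖y‖ ^ 2 / 2)) := by
            ring
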